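/- Let a ∈ ℝ \ {0,1} and g₀,…,g₄, f₀,…,f₄ ∈ ℝ. Define R(t) = g₀(t−1)²(t−a)² + g₁t²(t−a)² + g₂t²(t−1)² + g₃t²(t−1)(t−a) + g₄t(t−1)(t−a), S(t) = f₀(t−1)²(t−a)² + f₁t²(t−a)² + f₂t²(t−1)² + f₃t²(t−1)(t−a) + f₄t(t−1)(t−a), and G(t) = 3t² − 2(a+1)t + a. Let y be three times differentiable on an open interval I ⊆ ℝ with y'(x) ≠ 0, y(x) ∉ {0,1,a}, R(y(x)) ≠ 0, and (y'(x))² = 4·y(x)²·(y(x)−1)²·(y(x)−a)²/R(y(x)) for all x ∈ I. Then for every x ∈ I (writing y = y(x)): −S(y)/R(y) − (1/2)·{y,x}(x) = (y²(y−1)²(y−a)²/R(y)²)·[ R''(y) + (G(y)·R'(y) − 2·R(y)·G'(y))/(y(y−1)(y−a)) + R(y)·G(y)²/(y²(y−1)²(y−a)²) − (5/4)·R'(y)²/R(y) ] − S(y)/R(y). -/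

import Mathlib

/-!
If `y' ^ 2 = F ∘ y`, differentiating gives `y'' = F' (y) / 2` and `y''' = F'' (y) y' / 2`, so the
Schwarzian depends on `y` only through `F`: `{y, x} = F'' / 2 - 3 F' ^ 2 / (8 F)` at `y x`.
Here `F = 4 P² / R` with `P t = t (t - 1) (t - a)`, and `P' = G`, so the closed form of the
potential is an identity of rational functions in `P, G, G', R, R', R''`.
-/

/-- The numerator polynomial `R` of the Heun-class Bose invariant. -/
def heunR (a g₀ g₁ g₂ g₃ g₄ : ℝ) : ℝ → ℝ := fun t =>
  g₀ * (t - 1) ^ 2 * (t - a) ^ 2 + g₁ * t ^ 2 * (t - a) ^ 2 + g₂ * t ^ 2 * (t - 1) ^ 2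
    + g₃ * t ^ 2 * (t - 1) * (t - a) + g₄ * t * (t - 1) * (t - a)

/-- The polynomial `S` of the Heun-class Bose invariant. -/
def heunS (a f₀ f₁ f₂ f₃ f₄ : ℝ) : ℝ → ℝ := fun t =>
  f₀ * (t - 1) ^ 2 * (t - a) ^ 2 + f₁ * t ^ 2 * (t - a) ^ 2 + f₂ * t ^ 2 * (t - 1) ^ 2
    + f₃ * t ^ 2 * (t - 1) * (t - a) + f₄ * t * (t - 1) * (t - a)

/-- `G(t) = 3t² − 2(a+1)t + a`. -/
def heunG (a : ℝ) : ℝ → ℝ := fun t => 3 * t ^ 2 - 2 * (a + 1) * t + a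

open Filter Topology

noncomputable def schwarzian (y : ℝ → ℝ) (x : ℝ) : ℝ :=
  deriv (fun t => deriv (deriv y) t / deriv y t) x - 1 / 2 * (deriv (deriv y) x / deriv y x) ^ 2

section DerivSqEq

variable {y F F' : ℝ → ℝ} {I : Set ℝ} {x : ℝ}

theorem deriv_deriv_eq_of_deriv_sq_eq (hI : IsOpen I)
    (hy' : ∀ x ∈ I, DifferentiableAt ℝ (deriv y) x) (hy0 : ∀ x ∈ I, deriv y x ≠ 0)
    (hsq : ∀ x ∈ I, deriv y x ^ 2 = F (y x)) (hF : ∀ x ∈ I, HasDerivAt F (F' (y x)) (y x))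
    (hx : x ∈ I) : deriv (deriv y) x = F' (y x) / 2 := by
  have hy : HasDerivAt y (deriv y x) x :=
    (differentiableAt_of_deriv_ne_zero (hy0 x hx)).hasDerivAt
  have hsq_nhds : (fun z => deriv y z ^ 2) =ᶠ[𝓝 x] F ∘ y :=
    eventually_of_mem (hI.mem_nhds hx) hsq
  have hlhs : HasDerivAt (F ∘ y) (2 * deriv y x * deriv (deriv y) x) x := by
    simpa [mul_comm] using ((hy' x hx).hasDerivAt.pow 2).congr_of_eventuallyEq hsq_nhds.symm
  have hrhs : HasDerivAt (F ∘ y) (F' (y x) * deriv y x) x := (hF x hx).comp x hy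
  refine mul_right_cancel₀ (hy0 x hx) ?_
  linarith [hlhs.unique hrhs]

theorem schwarzian_eq_of_deriv_sq_eq (hI : IsOpen I)
    (hy' : ∀ x ∈ I, DifferentiableAt ℝ (deriv y) x) (hy0 : ∀ x ∈ I, deriv y x ≠ 0)
    (hsq : ∀ x ∈ I, deriv y x ^ 2 = F (y x)) (hF : ∀ x ∈ I, HasDerivAt F (F' (y x)) (y x))
    {f'' : ℝ} (hF' : HasDerivAt F' f'' (y x)) (hx : x ∈ I) :
    schwarzian y x = f'' / 2 - 3 * F' (y x) ^ 2 / (8 * F (y x)) := by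
  have hy : HasDerivAt y (deriv y x) x :=
    (differentiableAt_of_deriv_ne_zero (hy0 x hx)).hasDerivAt
  have hy''_nhds : deriv (deriv y) =ᶠ[𝓝 x] fun z => F' (y z) / 2 :=
    eventually_of_mem (hI.mem_nhds hx) fun z hz => deriv_deriv_eq_of_deriv_sq_eq hI hy' hy0 hsq hF hz
  have hy''' : HasDerivAt (deriv (deriv y)) (f'' * deriv y x / 2) x :=
    ((hF'.comp x hy).div_const 2).congr_of_eventuallyEq hy''_nhds
  have hquot : HasDerivAt (fun t => deriv (deriv y) t / deriv y t) _ x :=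
    hy'''.div (hy' x hx).hasDerivAt (hy0 x hx)
  have hFx : F (y x) ≠ 0 := hsq x hx ▸ pow_ne_zero 2 (hy0 x hx)
  have hy0x := hy0 x hx
  rw [schwarzian, hquot.deriv, deriv_deriv_eq_of_deriv_sq_eq hI hy' hy0 hsq hF hx, ← hsq x hx]
  field_simp
  ring

end DerivSqEq

section FourSqDiv

variable {P P' P'' R R' R'' : ℝ → ℝ} {t : ℝ}

theorem hasDerivAt_four_mul_sq_div (hP : HasDerivAt P (P' t) t) (hR : HasDerivAt R (R' t) t)
    (hRt : R t ≠ 0) :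
    HasDerivAt (fun s => 4 * P s ^ 2 / R s)
      ((8 * P t * P' t * R t - 4 * P t ^ 2 * R' t) / R t ^ 2) t := by
  refine (((hP.fun_pow 2).const_mul 4).div hR hRt).congr_deriv ?_
  ring

theorem hasDerivAt_deriv_four_mul_sq_div (hP : HasDerivAt P (P' t) t)
    (hP' : HasDerivAt P' (P'' t) t) (hR : HasDerivAt R (R' t) t)
    (hR' : HasDerivAt R' (R'' t) t) (hRt : R t ≠ 0) :
    HasDerivAt (fun s => (8 * P s * P' s * R s - 4 * P s ^ 2 * R' s) / R s ^ 2)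
      ((8 * P' t ^ 2 * R t + 8 * P t * P'' t * R t - 4 * P t ^ 2 * R'' t) / R t ^ 2
        - 2 * (8 * P t * P' t * R t - 4 * P t ^ 2 * R' t) * R' t / R t ^ 3) t := by
  have hnum := (((hP.const_mul 8).fun_mul hP').fun_mul hR).fun_sub
    (((hP.fun_pow 2).const_mul 4).fun_mul hR')
  refine (hnum.div (hR.fun_pow 2) (pow_ne_zero 2 hRt)).congr_deriv ?_
  field_simp
  ring

end FourSqDiv

theorem contDiff_heunR (a g₀ g₁ g₂ g₃ g₄ : ℝ) : ContDiff ℝ 2 (heunR a g₀ g₁ g₂ g₃ g₄) := by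
  unfold heunR
  fun_prop

theorem differentiable_heunG (a : ℝ) : Differentiable ℝ (heunG a) := by
  unfold heunG
  fun_prop

def heunP (a : ℝ) : ℝ → ℝ := fun t => t * (t - 1) * (t - a)

theorem hasDerivAt_heunP (a t : ℝ) : HasDerivAt (heunP a) (heunG a t) t := by
  refine (((hasDerivAt_id t).fun_mul ((hasDerivAt_id t).sub_const 1)).fun_mul
    ((hasDerivAt_id t).sub_const a)).congr_deriv ?_
  simp only [heunG, id_eq]
  ring

theorem stmt_13_general (a : ℝ)
    (g₀ g₁ g₂ g₃ g₄ f₀ f₁ f₂ f₃ f₄ : ℝ) (y : ℝ → ℝ) (I : Set ℝ) (hI : IsOpen I)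
    (hy' : ∀ x ∈ I, DifferentiableAt ℝ (deriv y) x)
    (hy0 : ∀ x ∈ I, deriv y x ≠ 0)
    (heq : ∀ x ∈ I, (deriv y x) ^ 2
      = 4 * (y x) ^ 2 * (y x - 1) ^ 2 * (y x - a) ^ 2 / heunR a g₀ g₁ g₂ g₃ g₄ (y x)) :
    ∀ x ∈ I,
      -(heunS a f₀ f₁ f₂ f₃ f₄ (y x)) / heunR a g₀ g₁ g₂ g₃ g₄ (y x)
          - (1 / 2) * (deriv (fun t => deriv (deriv y) t / deriv y t) x
              - (1 / 2) * (deriv (deriv y) x / deriv y x) ^ 2)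
        = ((y x) ^ 2 * (y x - 1) ^ 2 * (y x - a) ^ 2
              / (heunR a g₀ g₁ g₂ g₃ g₄ (y x)) ^ 2) *
            (deriv (deriv (heunR a g₀ g₁ g₂ g₃ g₄)) (y x)
              + (heunG a (y x) * deriv (heunR a g₀ g₁ g₂ g₃ g₄) (y x)
                  - 2 * heunR a g₀ g₁ g₂ g₃ g₄ (y x) * deriv (heunG a) (y x))
                / (y x * (y x - 1) * (y x - a))
              + heunR a g₀ g₁ g₂ g₃ g₄ (y x) * (heunG a (y x)) ^ 2
                / ((y x) ^ 2 * (y x - 1) ^ 2 * (y x - a) ^ 2)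
              - (5 / 4) * (deriv (heunR a g₀ g₁ g₂ g₃ g₄) (y x)) ^ 2
                / heunR a g₀ g₁ g₂ g₃ g₄ (y x))
          - heunS a f₀ f₁ f₂ f₃ f₄ (y x) / heunR a g₀ g₁ g₂ g₃ g₄ (y x) := by
  set R := heunR a g₀ g₁ g₂ g₃ g₄
  have hR : ContDiff ℝ 2 R := contDiff_heunR a g₀ g₁ g₂ g₃ g₄
  have hsq : ∀ x ∈ I, deriv y x ^ 2 = 4 * heunP a (y x) ^ 2 / R (y x) :=
    fun x hx => by rw [heq x hx, heunP]; ring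
  have hRy : ∀ x ∈ I, R (y x) ≠ 0 := fun x hx hRx => hy0 x hx (by simpa [hRx] using hsq x hx)
  intro x hx
  have hRx := hRy x hx
  have hPx : heunP a (y x) ≠ 0 := fun hPx => hy0 x hx (by simpa [hPx] using hsq x hx)
  have hS := schwarzian_eq_of_deriv_sq_eq (F := fun s => 4 * heunP a s ^ 2 / R s)
    (F' := fun s => (8 * heunP a s * heunG a s * R s - 4 * heunP a s ^ 2 * deriv R s) / R s ^ 2)
    hI hy' hy0 hsq
    (fun x hx => hasDerivAt_four_mul_sq_div (hasDerivAt_heunP a (y x))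
      (hR.differentiable two_ne_zero (y x)).hasDerivAt (hRy x hx))
    (hasDerivAt_deriv_four_mul_sq_div (hasDerivAt_heunP a (y x))
      (differentiable_heunG a (y x)).hasDerivAt (hR.differentiable two_ne_zero (y x)).hasDerivAt
      (hR.differentiable_deriv_two (y x)).hasDerivAt (hRy x hx)) hx
  change _ - 1 / 2 * schwarzian y x = _
  rw [hS, show y x ^ 2 * (y x - 1) ^ 2 * (y x - a) ^ 2 = heunP a (y x) ^ 2 by rw [heunP]; ring,
    show y x * (y x - 1) * (y x - a) = heunP a (y x) from rfl]
  field_simp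
  ring

/-- closed form of the potential `V_H` of the Heun class. -/
theorem stmt_13 (a : ℝ) (ha0 : a ≠ 0) (ha1 : a ≠ 1)
    (g₀ g₁ g₂ g₃ g₄ f₀ f₁ f₂ f₃ f₄ : ℝ) (y : ℝ → ℝ) (I : Set ℝ) (hI : IsOpen I)
    (hy : ∀ x ∈ I, DifferentiableAt ℝ y x)
    (hy' : ∀ x ∈ I, DifferentiableAt ℝ (deriv y) x)
    (hy'' : ∀ x ∈ I, DifferentiableAt ℝ (deriv (deriv y)) x)
    (hy0 : ∀ x ∈ I, deriv y x ≠ 0)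
    (hy01a : ∀ x ∈ I, y x ≠ 0 ∧ y x ≠ 1 ∧ y x ≠ a)
    (hR : ∀ x ∈ I, heunR a g₀ g₁ g₂ g₃ g₄ (y x) ≠ 0)
    (heq : ∀ x ∈ I, (deriv y x) ^ 2
      = 4 * (y x) ^ 2 * (y x - 1) ^ 2 * (y x - a) ^ 2 / heunR a g₀ g₁ g₂ g₃ g₄ (y x)) :
    ∀ x ∈ I,
      -(heunS a f₀ f₁ f₂ f₃ f₄ (y x)) / heunR a g₀ g₁ g₂ g₃ g₄ (y x)
          - (1 / 2) * (deriv (fun t => deriv (deriv y) t / deriv y t) x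
              - (1 / 2) * (deriv (deriv y) x / deriv y x) ^ 2)
        = ((y x) ^ 2 * (y x - 1) ^ 2 * (y x - a) ^ 2
              / (heunR a g₀ g₁ g₂ g₃ g₄ (y x)) ^ 2) *
            (deriv (deriv (heunR a g₀ g₁ g₂ g₃ g₄)) (y x)
              + (heunG a (y x) * deriv (heunR a g₀ g₁ g₂ g₃ g₄) (y x)
                  - 2 * heunR a g₀ g₁ g₂ g₃ g₄ (y x) * deriv (heunG a) (y x))
                / (y x * (y x - 1) * (y x - a))
              + heunR a g₀ g₁ g₂ g₃ g₄ (y x) * (heunG a (y x)) ^ 2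
                / ((y x) ^ 2 * (y x - 1) ^ 2 * (y x - a) ^ 2)
              - (5 / 4) * (deriv (heunR a g₀ g₁ g₂ g₃ g₄) (y x)) ^ 2
                / heunR a g₀ g₁ g₂ g₃ g₄ (y x))
          - heunS a f₀ f₁ f₂ f₃ f₄ (y x) / heunR a g₀ g₁ g₂ g₃ g₄ (y x) :=
  stmt_13_general a g₀ g₁ g₂ g₃ g₄ f₀ f₁ f₂ f₃ f₄ y I hI hy' hy0 heq
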